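/- Under the elliptical model with E(ξ₁²) = p, the parameter ς² = Var(ξ₁²) satisfies the estimating equation ς² = p(p+2)·[Var(‖x₁‖²) − 2tr(Σ²)]/[tr(Σ)² + 2tr(Σ²)] + 2p, provided Σ ≠ 0. -/

import Mathlib

open MeasureTheory ProbabilityTheory Matrix

/-- A probability measure on vectors is the uniform distribution on the unit sphere:
it is a probability measure, concentrated on the unit sphere, and invariant under
every orthogonal transformation. -/
def IsUniformOnSphere {p : ℕ} (μ : MeasureTheory.Measure (Fin p → ℝ)) : Prop :=
  MeasureTheory.IsProbabilityMeasure μ ∧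
  (∀ᵐ x ∂μ, dotProduct x x = 1) ∧
  ∀ Q : Matrix (Fin p) (Fin p) ℝ, Q ∈ Matrix.orthogonalGroup (Fin p) ℝ →
    μ.map (fun x => Q.mulVec x) = μ

open scoped ComplexOrder in
/-- The positive semidefinite square root of a positive semidefinite matrix
(the definition `Matrix.PosSemidef.sqrt` of the older Mathlib, removed since). -/
noncomputable def Matrix.PosSemidef.sqrt {n : Type*} [Fintype n] [DecidableEq n]
    {𝕜 : Type*} [RCLike 𝕜] {A : Matrix n n 𝕜} (hA : A.PosSemidef) : Matrix n n 𝕜 :=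
  hA.1.eigenvectorUnitary.1 * diagonal ((↑) ∘ (√·) ∘ hA.1.eigenvalues) *
  (star hA.1.eigenvectorUnitary : Matrix n n 𝕜)

/-!
Since `x = ξ Σ^{1/2} u`, we have `‖x‖² = ξ² uᵀΣu`, so by independence
`Var ‖x‖² = E ξ⁴ · E (uᵀΣu)² - (tr Σ)²` while `Var ξ² = E ξ⁴ - p²`; eliminating `E ξ⁴` gives the
estimating equation. Diagonalising `Σ` by an orthogonal matrix, which preserves the law of `u`,
reduces `E (uᵀΣu)²` to the moments `E u_i² u_j² = (1 + 2 δ_ij) / (p (p + 2))`. These come from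
invariance under Householder reflections: the one along `e_j` flips the sign of `u_j`, killing odd
moments, and the one along `e_i + 2 e_j` sends `u_i` to `(3 u_i - 4 u_j) / 5`, which forces
`E u_i⁴ = 3 E u_i² u_j²`; the constraint `∑ u_j² = 1` then fixes the scale.
-/

section Householder

variable {n : Type*} [Fintype n] [DecidableEq n]

noncomputable def householder (w : n → ℝ) : Matrix n n ℝ :=
  1 - (2 / (w ⬝ᵥ w)) • vecMulVec w w

lemma householder_mulVec (w v : n → ℝ) :
    householder w *ᵥ v = v - (2 * (w ⬝ᵥ v) / (w ⬝ᵥ w)) • w := by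
  simp only [householder, sub_mulVec, one_mulVec, smul_mulVec, vecMulVec_mulVec]
  rw [op_smul_eq_smul, smul_smul]
  ring_nf

lemma householder_mem_orthogonalGroup {w : n → ℝ} (hw : w ≠ 0) :
    householder w ∈ orthogonalGroup n ℝ := by
  have hww : w ⬝ᵥ w ≠ 0 := by simpa using hw
  have hsymm : star (householder w) = householder w := by
    simp [householder, star_eq_conjTranspose, conjTranspose_eq_transpose_of_trivial,
      transpose_vecMulVec]
  rw [mem_unitaryGroup_iff, hsymm, householder, sub_mul, mul_sub, mul_sub, one_mul, mul_one,
    one_mul, smul_mul_smul_comm, vecMulVec_mul_vecMulVec, vecMulVec_smul, smul_smul]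
  rw [show 2 / w ⬝ᵥ w * (2 / w ⬝ᵥ w) * w ⬝ᵥ w = 2 * (2 / w ⬝ᵥ w) by field_simp, mul_smul]
  module

lemma householder_single_mulVec (j : n) (v : n → ℝ) :
    householder (Pi.single j 1) *ᵥ v = Function.update v j (-v j) := by
  ext k
  rcases eq_or_ne k j with rfl | hk
  · simp only [householder_mulVec, single_dotProduct, Pi.sub_apply, Pi.smul_apply,
      Pi.single_eq_same, Function.update_self]
    ring
  · simp [householder_mulVec, hk]

lemma householder_single_add_single_mulVec_apply {i j : n} (hij : i ≠ j) (v : n → ℝ) :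
    (householder (Pi.single i 1 + Pi.single j 2) *ᵥ v) i = 3 / 5 * v i + (-4 / 5) * v j := by
  simp only [householder_mulVec, add_dotProduct, dotProduct_add, single_dotProduct,
    dotProduct_single, Pi.sub_apply, Pi.smul_apply, Pi.add_apply, Pi.single_eq_same,
    Pi.single_eq_of_ne hij, Pi.single_eq_of_ne hij.symm, smul_eq_mul]
  ring

end Householder

lemma isCompact_setOf_dotProduct_self_eq_one {p : ℕ} :
    IsCompact {v : Fin p → ℝ | v ⬝ᵥ v = 1} := by
  refine Metric.isCompact_of_isClosed_isBounded (isClosed_eq (by fun_prop) continuous_const)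
    (Metric.isBounded_closedBall (x := 0) (r := 1) |>.subset fun v hv => ?_)
  rw [mem_closedBall_zero_iff, pi_norm_le_iff_of_nonneg zero_le_one]
  intro k
  rw [Real.norm_eq_abs, abs_le_one_iff_mul_self_le_one, ← hv.out]
  exact Finset.single_le_sum (f := fun i => v i * v i) (fun i _ => mul_self_nonneg _)
    (Finset.mem_univ k)

namespace IsUniformOnSphere

variable {p : ℕ} {μ : Measure (Fin p → ℝ)}

lemma integrable_of_continuous (hμ : IsUniformOnSphere μ) {f : (Fin p → ℝ) → ℝ}
    (hf : Continuous f) : Integrable f μ := by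
  have := hμ.1
  rw [← Measure.restrict_eq_self_of_ae_mem hμ.2.1]
  exact hf.continuousOn.integrableOn_compact isCompact_setOf_dotProduct_self_eq_one

lemma integrable_comp {Ω : Type*} [MeasurableSpace Ω] {P : Measure Ω} {u : Ω → Fin p → ℝ}
    (hu : IsUniformOnSphere (P.map u)) (hum : Measurable u) {f : (Fin p → ℝ) → ℝ}
    (hf : Continuous f) : Integrable (f ∘ u) P :=
  (integrable_map_measure hf.aestronglyMeasurable hum.aemeasurable).1
    (hu.integrable_of_continuous hf)

lemma sum_coord_sq_eq_one (hμ : IsUniformOnSphere μ) : ∀ᵐ v ∂μ, ∑ i, v i ^ 2 = 1 := by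
  filter_upwards [hμ.2.1] with v hv
  simpa [dotProduct, sq] using hv

lemma integral_comp_mulVec (hμ : IsUniformOnSphere μ) {Q : Matrix (Fin p) (Fin p) ℝ}
    (hQ : Q ∈ orthogonalGroup (Fin p) ℝ) {f : (Fin p → ℝ) → ℝ} (hf : Continuous f) :
    ∫ v, f (Q *ᵥ v) ∂μ = ∫ v, f v ∂μ := by
  conv_rhs => rw [← hμ.2.2 Q hQ]
  exact (integral_map (by fun_prop) hf.aestronglyMeasurable).symm

lemma integral_pow_mul_pow_eq_zero (hμ : IsUniformOnSphere μ) {i j : Fin p} (hij : i ≠ j)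
    (k : ℕ) {l : ℕ} (hl : Odd l) : ∫ v, v i ^ k * v j ^ l ∂μ = 0 := by
  have hflip := hμ.integral_comp_mulVec
    (householder_mem_orthogonalGroup (w := Pi.single j 1) (by simp))
    (f := fun v => v i ^ k * v j ^ l) (by fun_prop)
  simp only [householder_single_mulVec, Function.update_self, Function.update_of_ne hij,
    hl.neg_pow, mul_neg, integral_neg] at hflip
  linarith

lemma integral_comp_coord_eq_pythagorean (hμ : IsUniformOnSphere μ) {i j : Fin p} (hij : i ≠ j)
    {f : ℝ → ℝ} (hf : Continuous f) :
    ∫ v, f (v i) ∂μ = ∫ v, f (3 / 5 * v i + (-4 / 5) * v j) ∂μ := by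
  have hw : (Pi.single i 1 + Pi.single j 2 : Fin p → ℝ) ≠ 0 := by
    intro h
    simpa [hij.symm] using congrFun h i
  simp_rw [← householder_single_add_single_mulVec_apply hij]
  exact (hμ.integral_comp_mulVec (householder_mem_orthogonalGroup hw) (by fun_prop)).symm

lemma integral_mul_coord_add_mul_coord_pow (hμ : IsUniformOnSphere μ) (i j : Fin p)
    (a b : ℝ) (n : ℕ) :
    ∫ v, (a * v i + b * v j) ^ n ∂μ =
      ∑ k ∈ Finset.range (n + 1),
        a ^ k * b ^ (n - k) * n.choose k * ∫ v, v i ^ k * v j ^ (n - k) ∂μ := by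
  simp_rw [add_pow, ← integral_const_mul]
  rw [integral_finsetSum _ fun k _ => hμ.integrable_of_continuous (by fun_prop)]
  congr 1; ext k; congr 1; ext v
  ring

lemma integral_coord_sq_eq (hμ : IsUniformOnSphere μ) (i j : Fin p) :
    ∫ v, v i ^ 2 ∂μ = ∫ v, v j ^ 2 ∂μ := by
  rcases eq_or_ne i j with rfl | hij
  · rfl
  have h := hμ.integral_comp_coord_eq_pythagorean hij (f := (· ^ 2)) (continuous_pow 2)
  have hodd := hμ.integral_pow_mul_pow_eq_zero hij 1 odd_one
  simp only [pow_one] at hodd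
  rw [integral_mul_coord_add_mul_coord_pow hμ] at h
  norm_num [Finset.sum_range_succ, hodd] at h
  linarith

lemma integral_coord_sq (hμ : IsUniformOnSphere μ) (i : Fin p) : ∫ v, v i ^ 2 ∂μ = 1 / p := by
  have := hμ.1
  have hsum : ∑ j, ∫ v, v j ^ 2 ∂μ = 1 := by
    rw [← integral_finsetSum _ fun j _ => hμ.integrable_of_continuous (by fun_prop),
      integral_congr_ae hμ.sum_coord_sq_eq_one, integral_const, probReal_univ, smul_eq_mul,
      mul_one]
  simp_rw [hμ.integral_coord_sq_eq _ i, Finset.sum_const, Finset.card_univ, Fintype.card_fin,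
    nsmul_eq_mul] at hsum
  have hp : (p : ℝ) ≠ 0 := Nat.cast_ne_zero.2 i.pos.ne'
  field_simp
  linarith

lemma integral_coord_pow_four (hμ : IsUniformOnSphere μ) {i j : Fin p} (hij : i ≠ j) :
    ∫ v, v i ^ 4 ∂μ = 3 * ∫ v, v i ^ 2 * v j ^ 2 ∂μ := by
  have h₁ := hμ.integral_comp_coord_eq_pythagorean hij (f := (· ^ 4)) (continuous_pow 4)
  have h₂ := hμ.integral_comp_coord_eq_pythagorean hij.symm (f := (· ^ 4)) (continuous_pow 4)
  have hodd₁ := hμ.integral_pow_mul_pow_eq_zero hij 1 (by decide : Odd 3)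
  have hodd₂ := hμ.integral_pow_mul_pow_eq_zero hij 3 odd_one
  have hodd₃ := hμ.integral_pow_mul_pow_eq_zero hij.symm 1 (by decide : Odd 3)
  have hodd₄ := hμ.integral_pow_mul_pow_eq_zero hij.symm 3 odd_one
  have hcomm : ∫ v, v j ^ 2 * v i ^ 2 ∂μ = ∫ v, v i ^ 2 * v j ^ 2 ∂μ := by
    simp_rw [mul_comm]
  simp only [pow_one] at hodd₁ hodd₂ hodd₃ hodd₄
  rw [integral_mul_coord_add_mul_coord_pow hμ] at h₁ h₂
  norm_num [Finset.sum_range_succ, Nat.choose, hodd₁, hodd₂, hodd₃, hodd₄, hcomm] at h₁ h₂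
  linarith

lemma integral_coord_sq_mul_coord_sq (hμ : IsUniformOnSphere μ) (i j : Fin p) :
    ∫ v, v i ^ 2 * v j ^ 2 ∂μ = (if i = j then 3 else 1) / (p * (p + 2)) := by
  have := hμ.1
  set c := (∫ v, v i ^ 4 ∂μ) / 3
  have hc (j : Fin p) : ∫ v, v i ^ 2 * v j ^ 2 ∂μ = c + if i = j then 2 * c else 0 := by
    split_ifs with h
    · subst h
      simp only [c, ← pow_add]
      ring
    · simp only [c, hμ.integral_coord_pow_four h]
      ring
  have hsum : ∑ j, ∫ v, v i ^ 2 * v j ^ 2 ∂μ = 1 / p := by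
    rw [← integral_finsetSum _ fun j _ => hμ.integrable_of_continuous (by fun_prop),
      ← hμ.integral_coord_sq i]
    refine integral_congr_ae ?_
    filter_upwards [hμ.sum_coord_sq_eq_one] with v hv
    rw [← Finset.mul_sum, hv, mul_one]
  rw [Finset.sum_congr rfl fun j _ => hc j, Finset.sum_add_distrib, Finset.sum_const,
    Finset.sum_ite_eq, if_pos (Finset.mem_univ i), Finset.card_univ, Fintype.card_fin,
    nsmul_eq_mul] at hsum
  have hp : (p : ℝ) ≠ 0 := Nat.cast_ne_zero.2 i.pos.ne'
  have hc' : c = 1 / (p * (p + 2)) := by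
    field_simp at hsum ⊢
    linarith
  rw [hc j, hc']
  split_ifs <;> ring

end IsUniformOnSphere

lemma mulVec_dotProduct_mulVec {m n : Type*} [Fintype m] [Fintype n] (A B : Matrix m n ℝ)
    (v w : n → ℝ) : (A *ᵥ v) ⬝ᵥ (B *ᵥ w) = v ⬝ᵥ (Aᵀ * B) *ᵥ w := by
  rw [← mulVec_mulVec, dotProduct_mulVec v Aᵀ, vecMul_transpose]

namespace Matrix.IsHermitian

variable {n : Type*} [Fintype n] [DecidableEq n] {S : Matrix n n ℝ}

lemma dotProduct_mulVec_eigenvectorUnitary (hS : S.IsHermitian) (v : n → ℝ) :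
    ((hS.eigenvectorUnitary : Matrix n n ℝ) *ᵥ v) ⬝ᵥ
        S *ᵥ ((hS.eigenvectorUnitary : Matrix n n ℝ) *ᵥ v) =
      ∑ k, hS.eigenvalues k * v k ^ 2 := by
  have hdiag := hS.conjStarAlgAut_star_eigenvectorUnitary
  rw [Unitary.conjStarAlgAut_star_apply, star_eq_conjTranspose,
    conjTranspose_eq_transpose_of_trivial] at hdiag
  rw [mulVec_mulVec, mulVec_dotProduct_mulVec, ← Matrix.mul_assoc, hdiag]
  simp [dotProduct, mulVec_diagonal, sq, mul_left_comm]

lemma trace_mul_self (hS : S.IsHermitian) :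
    (S * S).trace = ∑ k, hS.eigenvalues k ^ 2 := by
  conv_lhs => rw [hS.spectral_theorem, ← map_mul, Unitary.conjStarAlgAut_apply, trace_mul_cycle,
    Unitary.coe_star_mul_self, one_mul, diagonal_mul_diagonal, trace_diagonal]
  simp [sq]

end Matrix.IsHermitian

namespace IsUniformOnSphere

variable {p : ℕ} {μ : Measure (Fin p → ℝ)} {S : Matrix (Fin p) (Fin p) ℝ}

lemma integral_dotProduct_mulVec (hμ : IsUniformOnSphere μ) (hS : S.IsHermitian) :
    ∫ v, v ⬝ᵥ S *ᵥ v ∂μ = S.trace / p := by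
  rw [← hμ.integral_comp_mulVec hS.eigenvectorUnitary.2 (by fun_prop)]
  simp_rw [hS.dotProduct_mulVec_eigenvectorUnitary]
  rw [integral_finsetSum _ fun k _ => hμ.integrable_of_continuous (by fun_prop)]
  simp_rw [integral_const_mul, hμ.integral_coord_sq, hS.trace_eq_sum_eigenvalues, Finset.sum_div]
  simp [div_eq_mul_inv]

lemma integral_dotProduct_mulVec_sq (hμ : IsUniformOnSphere μ) (hS : S.IsHermitian) :
    ∫ v, (v ⬝ᵥ S *ᵥ v) ^ 2 ∂μ = (S.trace ^ 2 + 2 * (S * S).trace) / (p * (p + 2)) := by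
  rw [← hμ.integral_comp_mulVec hS.eigenvectorUnitary.2 (by fun_prop)]
  simp_rw [hS.dotProduct_mulVec_eigenvectorUnitary, sq (∑ k, _), Finset.sum_mul_sum]
  rw [integral_finsetSum _ fun k _ => integrable_finsetSum _ fun l _ =>
    hμ.integrable_of_continuous (by fun_prop)]
  have hterm (k l : Fin p) :
      ∫ v, hS.eigenvalues k * v k ^ 2 * (hS.eigenvalues l * v l ^ 2) ∂μ =
        (hS.eigenvalues k * hS.eigenvalues l + if k = l then 2 * hS.eigenvalues k ^ 2 else 0) /
          (p * (p + 2)) := by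
    have hfac : ∀ v : Fin p → ℝ, hS.eigenvalues k * v k ^ 2 * (hS.eigenvalues l * v l ^ 2) =
        hS.eigenvalues k * hS.eigenvalues l * (v k ^ 2 * v l ^ 2) := fun v => by ring
    simp_rw [hfac, integral_const_mul, hμ.integral_coord_sq_mul_coord_sq]
    split_ifs with h
    · subst h; ring
    · ring
  have hrow (k : Fin p) :
      ∫ v, ∑ l, hS.eigenvalues k * v k ^ 2 * (hS.eigenvalues l * v l ^ 2) ∂μ =
        ∑ l, (hS.eigenvalues k * hS.eigenvalues l +
          if k = l then 2 * hS.eigenvalues k ^ 2 else 0) / (p * (p + 2)) := by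
    rw [integral_finsetSum _ fun l _ => hμ.integrable_of_continuous (by fun_prop)]
    exact Finset.sum_congr rfl fun l _ => hterm k l
  simp_rw [hrow, ← Finset.sum_div, Finset.sum_add_distrib, Finset.sum_ite_eq, Finset.mem_univ,
    if_true, hS.trace_eq_sum_eigenvalues, hS.trace_mul_self, ← Finset.mul_sum, ← Finset.sum_mul]
  simp [sq]

end IsUniformOnSphere

namespace Matrix.PosSemidef

open scoped ComplexOrder

variable {n : Type*} [Fintype n] [DecidableEq n] {𝕜 : Type*} [RCLike 𝕜] {A : Matrix n n 𝕜}

lemma sqrt_eq_cfc (hA : A.PosSemidef) : hA.sqrt = cfc Real.sqrt A := by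
  rw [hA.1.cfc_eq]
  rfl

lemma isHermitian_sqrt (hA : A.PosSemidef) : hA.sqrt.IsHermitian := by
  rw [sqrt_eq_cfc]
  exact cfc_predicate _ _

lemma sqrt_mul_sqrt (hA : A.PosSemidef) : hA.sqrt * hA.sqrt = A := by
  rw [sqrt_eq_cfc, ← cfc_mul Real.sqrt Real.sqrt A]
  conv_rhs => rw [← cfc_id' ℝ A hA.1]
  refine cfc_congr fun x hx => Real.mul_self_sqrt ?_
  obtain ⟨i, rfl⟩ := hA.1.spectrum_real_eq_range_eigenvalues ▸ hx
  exact hA.eigenvalues_nonneg i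

lemma sqrt_mulVec_dotProduct_sqrt_mulVec {S : Matrix n n ℝ} (hS : S.PosSemidef) (v : n → ℝ) :
    (hS.sqrt *ᵥ v) ⬝ᵥ (hS.sqrt *ᵥ v) = v ⬝ᵥ S *ᵥ v := by
  rw [mulVec_dotProduct_mulVec, ← conjTranspose_eq_transpose_of_trivial, hS.isHermitian_sqrt.eq,
    hS.sqrt_mul_sqrt]

lemma trace_sq_add_two_trace_mul_self_pos {S : Matrix n n ℝ} (hS : S.PosSemidef) (hS₀ : S ≠ 0) :
    0 < S.trace ^ 2 + 2 * (S * S).trace := by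
  have htrace : 0 < S.trace := hS.trace_nonneg.lt_of_ne' (hS.trace_eq_zero_iff.not.2 hS₀)
  have htrace_sq : 0 ≤ (S * S).trace := by
    rw [hS.1.trace_mul_self]
    exact Finset.sum_nonneg fun k _ => sq_nonneg _
  positivity

end Matrix.PosSemidef

lemma ProbabilityTheory.IndepFun.variance_mul {Ω : Type*} [MeasurableSpace Ω] {μ : Measure Ω}
    [IsProbabilityMeasure μ] {X Y : Ω → ℝ} (h : IndepFun X Y μ) (hX : MemLp X 2 μ)
    (hY : MemLp Y 2 μ) :
    variance (X * Y) μ = μ[X ^ 2] * μ[Y ^ 2] - (μ[X] * μ[Y]) ^ 2 := by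
  have hsq : IndepFun (X ^ 2) (Y ^ 2) μ :=
    h.comp (continuous_pow 2).measurable (continuous_pow 2).measurable
  have hXY : MemLp (X * Y) 2 μ := by
    refine (memLp_two_iff_integrable_sq (hX.1.mul hY.1)).2 ?_
    convert hsq.integrable_mul hX.integrable_sq hY.integrable_sq using 1
    ext ω
    simp only [Pi.mul_apply, Pi.pow_apply, mul_pow]
  rw [variance_eq_sub hXY, mul_pow, hsq.integral_mul_eq_mul_integral (hX.1.pow 2) (hY.1.pow 2),
    h.integral_mul_eq_mul_integral hX.1 hY.1]

theorem estimating_equation_variance_general {Ω : Type*} [MeasurableSpace Ω]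
    (P : Measure Ω) [IsProbabilityMeasure P] (p : ℕ) (hp : 0 < p)
    (ξ : Ω → ℝ) (u : Ω → Fin p → ℝ)
    (hξm : Measurable ξ) (hum : Measurable u)
    (hξ2 : ∫ ω, (ξ ω) ^ 2 ∂P = (p : ℝ))
    (hξ4 : Integrable (fun ω => (ξ ω) ^ 4) P)
    (hu : IsUniformOnSphere (P.map u))
    (hindep : IndepFun ξ u P)
    (S : Matrix (Fin p) (Fin p) ℝ) (hS : S.PosSemidef) (hSne : S ≠ 0)
    (x : Ω → Fin p → ℝ) (hx : ∀ ω, x ω = ξ ω • (hS.sqrt.mulVec (u ω))) :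
    variance (fun ω => (ξ ω) ^ 2) P =
      (p : ℝ) * ((p : ℝ) + 2) *
        ((variance (fun ω => dotProduct (x ω) (x ω)) P - 2 * (S * S).trace) /
          (S.trace ^ 2 + 2 * (S * S).trace)) + 2 * (p : ℝ) := by
  set q : (Fin p → ℝ) → ℝ := fun v => v ⬝ᵥ S *ᵥ v
  have hnorm : (fun ω => x ω ⬝ᵥ x ω) = (fun ω => ξ ω ^ 2) * (q ∘ u) := by
    ext ω
    simp only [hx, smul_dotProduct, dotProduct_smul, smul_eq_mul,
      hS.sqrt_mulVec_dotProduct_sqrt_mulVec, Pi.mul_apply, Function.comp_apply, q]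
    ring
  have hξL2 : MemLp (fun ω => ξ ω ^ 2) 2 P :=
    (memLp_two_iff_integrable_sq (by fun_prop)).2 (by simpa only [← pow_mul] using hξ4)
  have hqL2 : MemLp (q ∘ u) 2 P :=
    (memLp_two_iff_integrable_sq (by fun_prop)).2
      (hu.integrable_comp hum (f := fun v => q v ^ 2) (by fun_prop))
  have hEq : ∫ ω, q (u ω) ∂P = S.trace / p := by
    rw [← integral_map hum.aemeasurable (by fun_prop), hu.integral_dotProduct_mulVec hS.1]
  have hEq2 : ∫ ω, q (u ω) ^ 2 ∂P = (S.trace ^ 2 + 2 * (S * S).trace) / (p * (p + 2)) := by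
    rw [← integral_map hum.aemeasurable (f := fun v => q v ^ 2) (by fun_prop),
      hu.integral_dotProduct_mulVec_sq hS.1]
  have hindep_sq : IndepFun (fun ω => ξ ω ^ 2) (q ∘ u) P :=
    hindep.comp (continuous_pow 2).measurable (by fun_prop)
  have hden := hS.trace_sq_add_two_trace_mul_self_pos hSne
  rw [hnorm, hindep_sq.variance_mul hξL2 hqL2, variance_eq_sub hξL2]
  simp only [Pi.pow_apply, Function.comp_apply, ← pow_mul, hξ2, hEq, hEq2]
  field_simp
  ring

/-- Estimating equation for ς² = Var(ξ²) in the elliptical model: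
ς² = p(p+2)·[Var(‖x‖²) − 2tr(Σ²)]/[tr(Σ)² + 2tr(Σ²)] + 2p. -/
theorem estimating_equation_variance {Ω : Type*} [MeasurableSpace Ω]
    (P : Measure Ω) [IsProbabilityMeasure P] (p : ℕ) (hp : 0 < p)
    (ξ : Ω → ℝ) (u : Ω → Fin p → ℝ)
    (hξm : Measurable ξ) (hum : Measurable u)
    (hξ0 : ∀ ω, 0 ≤ ξ ω)
    (hξ2 : ∫ ω, (ξ ω) ^ 2 ∂P = (p : ℝ))
    (hξ4 : Integrable (fun ω => (ξ ω) ^ 4) P)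
    (hu : IsUniformOnSphere (P.map u))
    (hindep : IndepFun ξ u P)
    (S : Matrix (Fin p) (Fin p) ℝ) (hS : S.PosSemidef) (hSne : S ≠ 0)
    (x : Ω → Fin p → ℝ) (hx : ∀ ω, x ω = ξ ω • (hS.sqrt.mulVec (u ω))) :
    variance (fun ω => (ξ ω) ^ 2) P =
      (p : ℝ) * ((p : ℝ) + 2) *
        ((variance (fun ω => dotProduct (x ω) (x ω)) P - 2 * (S * S).trace) /
          (S.trace ^ 2 + 2 * (S * S).trace)) + 2 * (p : ℝ) :=
  estimating_equation_variance_general P p hp ξ u hξm hum hξ2 hξ4 hu hindep S hS hSne x hx
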